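/- Let b ≥ 2 be an integer, m a positive integer, N = b^m, and β > 1. Then ∑_{j=1}^{⌊N^{1/β}⌋} (m − ⌊β log_b j⌋) b^{m − ⌊β log_b j⌋} ≤ b ζ(β) N log_b N, where ζ is the Riemann zeta function. -/
import Mathlib


/-- Zeta function as a real series, `ζ(p) = ∑_{n=1}^∞ n^{-p}`. -/
noncomputable def zetaR (p : ℝ) : ℝ := ∑' n : ℕ+, (n : ℝ) ^ (-p)

theorem stmt16 (b m : ℕ) (hb : 2 ≤ b) (hm : 0 < m) (N : ℕ) (hN : N = b ^ m)
    (β : ℝ) (hβ : 1 < β) :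
    ∑ j ∈ Finset.Icc 1 ⌊(N : ℝ) ^ (1 / β)⌋₊,
        ((m : ℝ) - (⌊β * Real.logb b j⌋ : ℤ)) * (b : ℝ) ^ ((m : ℤ) - ⌊β * Real.logb b j⌋) ≤
      b * zetaR β * N * Real.logb b N := by
  set J := ⌊(N : ℝ) ^ (1 / β)⌋₊ with hJ
  have hb1 : (1:ℝ) < b := by
    have : (2:ℝ) ≤ b := by exact_mod_cast hb
    linarith
  have hb0 : (0:ℝ) < b := by linarith
  have hbne : (b:ℝ) ≠ 0 := ne_of_gt hb0
  -- summability
  have hsumN : Summable (fun n : ℕ => (n:ℝ)^(-β)) := Real.summable_nat_rpow.2 (by linarith)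
  have hsum : Summable (fun n : ℕ+ => (n:ℝ)^(-β)) := hsumN.subtype _
  -- partial sums of j^{-β} are bounded by ζ(β)
  have hzeta : ∑ j ∈ Finset.Icc 1 J, ((j:ℝ))^(-β) ≤ zetaR β := by
    have h1 : zetaR β = ∑' n : ℕ, Set.indicator {n : ℕ | 0 < n} (fun n : ℕ => (n:ℝ)^(-β)) n :=
      tsum_subtype {n : ℕ | 0 < n} (fun n : ℕ => (n:ℝ)^(-β))
    rw [h1]
    have hle := Summable.sum_le_tsum (f := Set.indicator {n : ℕ | 0 < n} (fun n : ℕ => (n:ℝ)^(-β))) (Finset.Icc 1 J)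
      (fun i _ => Set.indicator_nonneg (fun n _ => Real.rpow_nonneg (Nat.cast_nonneg n) _) i)
      (hsumN.indicator {n : ℕ | 0 < n})
    refine le_trans (le_of_eq ?_) hle
    refine Finset.sum_congr rfl (fun j hj => ?_)
    rw [Set.indicator_of_mem]
    exact (Finset.mem_Icc.1 hj).1
  -- per-term bound
  have hterm : ∀ j ∈ Finset.Icc 1 J,
      ((m : ℝ) - (⌊β * Real.logb b j⌋ : ℤ)) * (b : ℝ) ^ ((m : ℤ) - ⌊β * Real.logb b j⌋)
        ≤ (m:ℝ) * ((b:ℝ)^(m:ℕ) * (b * (j:ℝ)^(-β))) := by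
    intro j hj
    have hj1 : 1 ≤ j := (Finset.mem_Icc.1 hj).1
    have hj0 : (0:ℝ) < j := by exact_mod_cast hj1
    set L := Real.logb b j with hLdef
    have hL0 : 0 ≤ L := Real.logb_nonneg hb1 (by exact_mod_cast hj1)
    have hw0 : (0:ℤ) ≤ ⌊β * L⌋ := Int.floor_nonneg.2 (mul_nonneg (by linarith) hL0)
    have h1 : ((m : ℝ) - (⌊β * L⌋ : ℤ)) ≤ (m:ℝ) := by
      have : (0:ℝ) ≤ ((⌊β * L⌋ : ℤ) : ℝ) := by exact_mod_cast hw0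
      linarith
    have key : (b:ℝ) ^ (-⌊β * L⌋ : ℤ) ≤ b * (j:ℝ)^(-β) := by
      have e1 : (b:ℝ) ^ (-⌊β * L⌋ : ℤ) = (b:ℝ) ^ (((-⌊β * L⌋ : ℤ)) : ℝ) :=
        (Real.rpow_intCast _ _).symm
      have e2 : (b:ℝ) ^ ((1:ℝ) - β * L) = b * (j:ℝ)^(-β) := by
        rw [Real.rpow_sub hb0, Real.rpow_one, mul_comm β L, Real.rpow_mul (le_of_lt hb0),
          Real.rpow_logb hb0 (ne_of_gt hb1) hj0, Real.rpow_neg (le_of_lt hj0),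
          div_eq_mul_inv]
      rw [e1, ← e2]
      apply Real.rpow_le_rpow_of_exponent_le (le_of_lt hb1)
      have hfl := Int.sub_one_lt_floor (β * L)
      push_cast
      linarith
    have h2 : (b:ℝ) ^ ((m:ℤ) - ⌊β * L⌋) ≤ (b:ℝ)^(m:ℕ) * (b * (j:ℝ)^(-β)) := by
      have : (b:ℝ) ^ ((m:ℤ) - ⌊β * L⌋) = (b:ℝ)^(m:ℕ) * (b:ℝ) ^ (-⌊β * L⌋ : ℤ) := by
        rw [← zpow_natCast (b:ℝ) m, ← zpow_add₀ hbne]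
        ring_nf
      rw [this]
      exact mul_le_mul_of_nonneg_left key (by positivity)
    exact mul_le_mul h1 h2 (by positivity) (by positivity)
  have hlogb : Real.logb b N = m := by
    rw [hN]
    push_cast
    rw [← Real.rpow_natCast (b:ℝ) m, Real.logb_rpow hb0 (ne_of_gt hb1)]
  calc ∑ j ∈ Finset.Icc 1 J,
        ((m : ℝ) - (⌊β * Real.logb b j⌋ : ℤ)) * (b : ℝ) ^ ((m : ℤ) - ⌊β * Real.logb b j⌋)
      ≤ ∑ j ∈ Finset.Icc 1 J, (m:ℝ) * ((b:ℝ)^(m:ℕ) * (b * (j:ℝ)^(-β))) :=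
        Finset.sum_le_sum hterm
    _ = ((m:ℝ) * (b:ℝ)^(m:ℕ) * b) * ∑ j ∈ Finset.Icc 1 J, (j:ℝ)^(-β) := by
        rw [Finset.mul_sum]
        exact Finset.sum_congr rfl (fun j _ => by ring)
    _ ≤ ((m:ℝ) * (b:ℝ)^(m:ℕ) * b) * zetaR β := by
        apply mul_le_mul_of_nonneg_left hzeta
        positivity
    _ = b * zetaR β * N * Real.logb b N := by
        rw [hlogb, hN]
        push_cast
        ring
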